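/- Let s = (1, 0, −1) ∈ ℝ³ and let A₁ and A₂ be the 3×3 real matrices A₁ = [[0, 1, 0], [2/3, 0, 1/3], [1, 0, 0]] and A₂ = [[0, 1, 0], [1/3, 0, 2/3], [0, 1, 0]]. Define f(A) = (1/2)·sᵀ(2I − A)^{−⊤}(I + D^in(A) − 2A)(2I − A)^{−1} s, where D^in(A) is the diagonal matrix whose v-th diagonal entry is the v-th column sum of A. Then f((A₁ + A₂)/2) > (f(A₁) + f(A₂))/2; in particular, the D-Dir objective is not matrix-convex. -/

import Mathlib

open Matrix

/-!
Write `z = (2I − A)⁻¹ s` for the equilibrium opinions. For row-stochastic `A` the quadratic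
form `zᵀ (I + Dⁱⁿ − 2A) z` equals `∑ᵤᵥ A u v (z u − z v)²`, so the D-Dir objective is half the
weighted disagreement of `z` along the edges. Solving `(2I − A) z = s` exactly at `A₁`, `A₂` and
their midpoint gives the values `174/361`, `10/27` and `279/625`, and `279/625` exceeds the
average of the other two, whereas a convex function lies below that average at the midpoint.
-/

/-- The diagonal in-degree matrix of `A`: the `v`-th diagonal entry is the `v`-th
column sum of `A`. -/
noncomputable def dIn (A : Matrix (Fin 3) (Fin 3) ℝ) : Matrix (Fin 3) (Fin 3) ℝ :=
  Matrix.diagonal (fun v => ∑ u, A u v)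

/-- The D-Dir objective at opinion vector `s`:
`f(A) = (1/2) sᵀ (2I − A)⁻ᵀ (I + Dⁱⁿ − 2A) (2I − A)⁻¹ s`. -/
noncomputable def dDir (s : Fin 3 → ℝ) (A : Matrix (Fin 3) (Fin 3) ℝ) : ℝ :=
  (1 / 2) * (s ⬝ᵥ (((2 - A)⁻¹)ᵀ * (1 + dIn A - 2 * A) * (2 - A)⁻¹).mulVec s)

lemma apply_midpoint_le_of_convex {E : Type*} [AddCommGroup E] [Module ℝ E] {f : E → ℝ}
    (hf : ∀ (x y : E) (t : ℝ), 0 ≤ t → t ≤ 1 →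
      f (t • x + (1 - t) • y) ≤ t * f x + (1 - t) * f y) (x y : E) :
    f ((1 / 2 : ℝ) • (x + y)) ≤ (f x + f y) / 2 := by
  have h := hf x y (1 / 2) (by norm_num) (by norm_num)
  norm_num [smul_add] at h ⊢
  linarith

section

variable {A : Matrix (Fin 3) (Fin 3) ℝ} {s z : Fin 3 → ℝ}

lemma dDir_eq_of_mulVec_eq (hdet : IsUnit (2 - A).det) (hz : (2 - A) *ᵥ z = s) :
    dDir s A = 1 / 2 * (z ⬝ᵥ (1 + dIn A - 2 * A) *ᵥ z) := by
  obtain rfl : z = (2 - A)⁻¹ *ᵥ s := by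
    rw [← hz, mulVec_mulVec, nonsing_inv_mul _ hdet, one_mulVec]
  rw [dDir, ← mulVec_mulVec, ← mulVec_mulVec, dotProduct_mulVec, vecMul_transpose]

lemma dotProduct_mulVec_eq_sum_sq_sub (hA : ∀ u, ∑ v, A u v = 1) (z : Fin 3 → ℝ) :
    z ⬝ᵥ (1 + dIn A - 2 * A) *ᵥ z = ∑ u, ∑ v, A u v * (z u - z v) ^ 2 := by
  simp only [Fin.sum_univ_three] at hA
  simp only [dotProduct, mulVec, dIn, two_mul, Matrix.sub_apply, Matrix.add_apply, one_apply,
    diagonal_apply, Fin.sum_univ_three, Fin.reduceEq, ↓reduceIte]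
  linear_combination -(z 0 ^ 2 * hA 0 + z 1 ^ 2 * hA 1 + z 2 ^ 2 * hA 2)

lemma dDir_eq_half_sum_sq_sub (hA : ∀ u, ∑ v, A u v = 1) (hdet : IsUnit (2 - A).det)
    (hz : (2 - A) *ᵥ z = s) :
    dDir s A = 1 / 2 * ∑ u, ∑ v, A u v * (z u - z v) ^ 2 := by
  rw [dDir_eq_of_mulVec_eq hdet hz, dotProduct_mulVec_eq_sum_sq_sub hA]

end

lemma dDir_A1 : dDir ![1, 0, -1] !![0, 1, 0; 2/3, 0, 1/3; 1, 0, 0] = 174 / 361 := by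
  rw [dDir_eq_half_sum_sq_sub (z := ![11/19, 3/19, -4/19])]
  · norm_num [Fin.sum_univ_three, cons_val_two]
  · intro u; fin_cases u <;> norm_num [Fin.sum_univ_three, cons_val_two]
  · norm_num [ofNat_fin_three, det_fin_three, cons_val_two]
  · ext i
    fin_cases i <;> norm_num [ofNat_fin_three, mulVec, dotProduct, Fin.sum_univ_three, cons_val_two]

lemma dDir_A2 : dDir ![1, 0, -1] !![0, 1, 0; 1/3, 0, 2/3; 0, 1, 0] = 10 / 27 := by
  rw [dDir_eq_half_sum_sq_sub (z := ![4/9, -1/9, -5/9])]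
  · norm_num [Fin.sum_univ_three, cons_val_two]
  · intro u; fin_cases u <;> norm_num [Fin.sum_univ_three, cons_val_two]
  · norm_num [ofNat_fin_three, det_fin_three, cons_val_two]
  · ext i
    fin_cases i <;> norm_num [ofNat_fin_three, mulVec, dotProduct, Fin.sum_univ_three, cons_val_two]

lemma dDir_midpoint : dDir ![1, 0, -1] !![0, 1, 0; 1/2, 0, 1/2; 1/2, 1/2, 0] = 279 / 625 := by
  rw [dDir_eq_half_sum_sq_sub (z := ![13/25, 1/25, -9/25])]
  · norm_num [Fin.sum_univ_three, cons_val_two]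
  · intro u; fin_cases u <;> norm_num [Fin.sum_univ_three, cons_val_two]
  · norm_num [ofNat_fin_three, det_fin_three, cons_val_two]
  · ext i
    fin_cases i <;> norm_num [ofNat_fin_three, mulVec, dotProduct, Fin.sum_univ_three, cons_val_two]

lemma half_smul_A1_add_A2 :
    (1 / 2 : ℝ) • (!![0, 1, 0; 2/3, 0, 1/3; 1, 0, 0] + !![0, 1, 0; 1/3, 0, 2/3; 0, 1, 0] :
      Matrix (Fin 3) (Fin 3) ℝ) = !![0, 1, 0; 1/2, 0, 1/2; 1/2, 1/2, 0] := by
  ext i j; fin_cases i <;> fin_cases j <;> norm_num [cons_val_two]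

/-- Counterexample to the matrix-convexity of the D-Dir objective. -/
theorem dDir_not_convex :
    let s : Fin 3 → ℝ := ![1, 0, -1]
    let A1 : Matrix (Fin 3) (Fin 3) ℝ := !![0, 1, 0; 2/3, 0, 1/3; 1, 0, 0]
    let A2 : Matrix (Fin 3) (Fin 3) ℝ := !![0, 1, 0; 1/3, 0, 2/3; 0, 1, 0]
    dDir s (((1 : ℝ) / 2) • (A1 + A2)) > (dDir s A1 + dDir s A2) / 2 ∧
      ¬ ∀ (B1 B2 : Matrix (Fin 3) (Fin 3) ℝ) (t : ℝ), 0 ≤ t → t ≤ 1 →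
          dDir s (t • B1 + (1 - t) • B2) ≤ t * dDir s B1 + (1 - t) * dDir s B2 := by
  intro s A1 A2
  have midpoint_gt : dDir s ((1 / 2 : ℝ) • (A1 + A2)) > (dDir s A1 + dDir s A2) / 2 := by
    rw [half_smul_A1_add_A2, dDir_A1, dDir_A2, dDir_midpoint]
    norm_num
  exact ⟨midpoint_gt, fun hconv => (apply_midpoint_le_of_convex hconv A1 A2).not_gt midpoint_gt⟩
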